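/- arXiv:1907.06873 — 3 statements merged into one kernel-verified Lean document; each statement's English description precedes it below -/
import Mathlib

section
/- Assume 1/2 ∈ σ(K₀). Then: (i) σ(K) = σ(K₀); (ii) 1/2 ∈ σ(K); and (iii) for every λ ∈ ℂ \ {0, 1/2} one has the equality of eigenspaces ker(λI − K) = ker(λI − K₀); in particular dim ker(λI − K) = dim ker(λI − K₀) for such λ. -/
/-!
Since `ℓ v = 0`, `ℓ` is a left eigenvector, for the eigenvalue `μ = 1/2`, of both `K₀` and
`K = K₀ + v ⊗ ℓ`, so `ℓ ∘ (λ - T) = (λ - μ) ℓ` for `T ∈ {K₀, K}`. At `λ = μ` this makes `μ - T`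
non-surjective, as `ℓ ≠ 0`. For `λ ≠ μ`, eigenvectors lie in `ker ℓ`, where `K` and `K₀` agree;
and if `λ - K₀` is invertible then `w := (λ - K₀)⁻¹ v` lies in `ker ℓ`, so
`λ - K = (λ - K₀)(1 - w ⊗ ℓ)` with `w ⊗ ℓ` square-zero. As `K₀ = K + (-v) ⊗ ℓ`, the argument is
symmetric.
-/

open ContinuousLinearMap

section

variable {𝕜 X : Type*} [NormedField 𝕜] [NormedAddCommGroup X] [NormedSpace 𝕜 X]
  {ℓ : X →L[𝕜] 𝕜} {μ lam : 𝕜}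

section LeftEigenvector

variable {T : X →L[𝕜] X}

lemma apply_smul_one_sub_apply (hT : ∀ x, ℓ (T x) = μ * ℓ x) (x : X) :
    ℓ ((lam • (1 : X →L[𝕜] X) - T) x) = (lam - μ) * ℓ x := by
  simp [hT, sub_mul]

lemma apply_smul_one_sub_apply_eq_zero_iff (hT : ∀ x, ℓ (T x) = μ * ℓ x) (hlam : lam ≠ μ)
    {x : X} : ℓ ((lam • (1 : X →L[𝕜] X) - T) x) = 0 ↔ ℓ x = 0 := by
  rw [apply_smul_one_sub_apply hT, mul_eq_zero, or_iff_right (sub_ne_zero.mpr hlam)]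

lemma mem_spectrum_of_left_eigenvector (hℓ : ℓ ≠ 0) (hT : ∀ x, ℓ (T x) = μ * ℓ x) :
    μ ∈ spectrum 𝕜 T := by
  rw [spectrum.mem_iff, Algebra.algebraMap_eq_smul_one]
  rintro ⟨u, hu⟩
  refine hℓ (ext fun x => ?_)
  have hx : (μ • (1 : X →L[𝕜] X) - T) ((↑u⁻¹ : X →L[𝕜] X) x) = x := by
    rw [← hu, ← mul_apply_eq_comp, Units.mul_inv, one_apply_eq_self]
  rw [← hx, apply_smul_one_sub_apply hT, sub_self, zero_mul, zero_apply]

end LeftEigenvector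

lemma isUnit_one_sub_smulRight {w : X} (hw : ℓ w = 0) :
    IsUnit (1 - ℓ.smulRight w) := by
  refine IsNilpotent.isUnit_one_sub ⟨2, ?_⟩
  rw [pow_two, mul_def, smulRight_comp_smulRight, hw, zero_smul, smulRight_zero]

section RankOnePerturbation

variable {K₀ K : X →L[𝕜] X} {v : X}

lemma apply_apply_of_rankOne (hK : ∀ φ, K φ = K₀ φ + ℓ φ • v)
    (hK₀ : ∀ φ, ℓ (K₀ φ) = μ * ℓ φ) (hv : ℓ v = 0) (φ : X) : ℓ (K φ) = μ * ℓ φ := by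
  simp [hK, hK₀, hv]

lemma isUnit_smul_one_sub_of_rankOne (hK : ∀ φ, K φ = K₀ φ + ℓ φ • v)
    (hK₀ : ∀ φ, ℓ (K₀ φ) = μ * ℓ φ) (hv : ℓ v = 0) (hlam : lam ≠ μ)
    (h : IsUnit (lam • (1 : X →L[𝕜] X) - K₀)) : IsUnit (lam • (1 : X →L[𝕜] X) - K) := by
  obtain ⟨u, hu⟩ := h
  set w := (↑u⁻¹ : X →L[𝕜] X) v
  have hw : (lam • (1 : X →L[𝕜] X) - K₀) w = v := by
    rw [← hu, ← mul_apply_eq_comp, Units.mul_inv, one_apply_eq_self]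
  have hℓw : ℓ w = 0 := (apply_smul_one_sub_apply_eq_zero_iff hK₀ hlam).mp (by rw [hw, hv])
  have hfactor : lam • (1 : X →L[𝕜] X) - K = (lam • 1 - K₀) * (1 - ℓ.smulRight w) := by
    ext φ
    simp only [mul_sub, mul_one, sub_apply, mul_apply_eq_comp, smulRight_apply, map_smul, hw, hK]
    abel
  rw [hfactor]
  exact hu ▸ u.isUnit.mul (isUnit_one_sub_smulRight hℓw)

lemma spectrum_eq_of_rankOne (hℓ : ℓ ≠ 0) (hK : ∀ φ, K φ = K₀ φ + ℓ φ • v)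
    (hK₀ : ∀ φ, ℓ (K₀ φ) = μ * ℓ φ) (hv : ℓ v = 0) : spectrum 𝕜 K = spectrum 𝕜 K₀ := by
  have hK' : ∀ φ, ℓ (K φ) = μ * ℓ φ := apply_apply_of_rankOne hK hK₀ hv
  have hK₀' : ∀ φ, K₀ φ = K φ + ℓ φ • -v := fun φ => by simp [hK]
  ext lam
  rcases eq_or_ne lam μ with rfl | hlam
  · exact iff_of_true (mem_spectrum_of_left_eigenvector hℓ hK')
      (mem_spectrum_of_left_eigenvector hℓ hK₀)
  rw [spectrum.mem_iff, spectrum.mem_iff, Algebra.algebraMap_eq_smul_one, not_iff_not]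
  exact ⟨isUnit_smul_one_sub_of_rankOne hK₀' hK' (by simp [hv]) hlam,
    isUnit_smul_one_sub_of_rankOne hK hK₀ hv hlam⟩

lemma ker_smul_one_sub_eq_of_rankOne (hK : ∀ φ, K φ = K₀ φ + ℓ φ • v)
    (hK₀ : ∀ φ, ℓ (K₀ φ) = μ * ℓ φ) (hv : ℓ v = 0) (hlam : lam ≠ μ) :
    LinearMap.ker ((lam • (1 : X →L[𝕜] X) - K : X →L[𝕜] X) : X →ₗ[𝕜] X) =
      LinearMap.ker ((lam • (1 : X →L[𝕜] X) - K₀ : X →L[𝕜] X) : X →ₗ[𝕜] X) := by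
  have hK' : ∀ φ, ℓ (K φ) = μ * ℓ φ := apply_apply_of_rankOne hK hK₀ hv
  have hagree : ∀ φ, ℓ φ = 0 →
      (lam • (1 : X →L[𝕜] X) - K) φ = (lam • (1 : X →L[𝕜] X) - K₀) φ := fun φ hφ => by
    simp [hK, hφ]
  ext φ
  simp only [LinearMap.mem_ker, coe_coe]
  constructor
  · intro h
    rwa [← hagree φ ((apply_smul_one_sub_apply_eq_zero_iff hK' hlam).mp (by rw [h, map_zero]))]
  · intro h
    rwa [hagree φ ((apply_smul_one_sub_apply_eq_zero_iff hK₀ hlam).mp (by rw [h, map_zero]))]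

end RankOnePerturbation

end

theorem statement2_general {X : Type*} [NormedAddCommGroup X] [NormedSpace ℂ X]
    (K₀ : X →L[ℂ] X)
    (ℓ : X →L[ℂ] ℂ) (hℓ : ℓ ≠ 0) (hℓK₀ : ∀ φ : X, ℓ (K₀ φ) = (1 / 2 : ℂ) * ℓ φ)
    (v : X) (hv : ℓ v = 0)
    (K : X →L[ℂ] X) (hK : ∀ φ : X, K φ = K₀ φ + ℓ φ • v) :
    spectrum ℂ K = spectrum ℂ K₀ ∧
    (1 / 2 : ℂ) ∈ spectrum ℂ K ∧
    ∀ lam : ℂ, lam ≠ 0 → lam ≠ 1 / 2 →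
      LinearMap.ker ((lam • (1 : X →L[ℂ] X) - K : X →L[ℂ] X) : X →ₗ[ℂ] X) =
        LinearMap.ker ((lam • (1 : X →L[ℂ] X) - K₀ : X →L[ℂ] X) : X →ₗ[ℂ] X) ∧
      Module.rank ℂ (LinearMap.ker ((lam • (1 : X →L[ℂ] X) - K : X →L[ℂ] X) : X →ₗ[ℂ] X)) =
        Module.rank ℂ (LinearMap.ker ((lam • (1 : X →L[ℂ] X) - K₀ : X →L[ℂ] X) : X →ₗ[ℂ] X)) := by
  refine ⟨spectrum_eq_of_rankOne hℓ hK hℓK₀ hv,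
    mem_spectrum_of_left_eigenvector hℓ (apply_apply_of_rankOne hK hℓK₀ hv),
    fun lam _ hlam => ?_⟩
  have hker := ker_smul_one_sub_eq_of_rankOne hK hℓK₀ hv hlam
  exact ⟨hker, by rw [hker]⟩

/-- Let `X` be an infinite-dimensional complex Banach space,
`K₀ : X →L[ℂ] X` compact, `ℓ : X →L[ℂ] ℂ` a nonzero functional with
`ℓ(K₀φ) = (1/2)ℓ(φ)` for all `φ`, and `v ∈ X` with `ℓ(v) = 0`.  Define the compact
operator `Kφ := K₀φ + ℓ(φ) • v`.  Assuming `1/2 ∈ σ(K₀)`, one has: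
(i) `σ(K) = σ(K₀)`; (ii) `1/2 ∈ σ(K)`; and (iii) for every `λ ∈ ℂ \ {0, 1/2}`,
`ker(λI − K) = ker(λI − K₀)`, in particular the eigenspace dimensions agree. -/
theorem statement2 {X : Type*} [NormedAddCommGroup X] [NormedSpace ℂ X]
    [CompleteSpace X] (hinf : ¬ FiniteDimensional ℂ X)
    (K₀ : X →L[ℂ] X) (hK₀compact : IsCompactOperator (⇑K₀))
    (ℓ : X →L[ℂ] ℂ) (hℓ : ℓ ≠ 0) (hℓK₀ : ∀ φ : X, ℓ (K₀ φ) = (1 / 2 : ℂ) * ℓ φ)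
    (v : X) (hv : ℓ v = 0)
    (K : X →L[ℂ] X) (hK : ∀ φ : X, K φ = K₀ φ + ℓ φ • v)
    (hhalf : (1 / 2 : ℂ) ∈ spectrum ℂ K₀) :
    spectrum ℂ K = spectrum ℂ K₀ ∧
    (1 / 2 : ℂ) ∈ spectrum ℂ K ∧
    ∀ lam : ℂ, lam ≠ 0 → lam ≠ 1 / 2 →
      LinearMap.ker ((lam • (1 : X →L[ℂ] X) - K : X →L[ℂ] X) : X →ₗ[ℂ] X) =
        LinearMap.ker ((lam • (1 : X →L[ℂ] X) - K₀ : X →L[ℂ] X) : X →ₗ[ℂ] X) ∧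
      Module.rank ℂ (LinearMap.ker ((lam • (1 : X →L[ℂ] X) - K : X →L[ℂ] X) : X →ₗ[ℂ] X)) =
        Module.rank ℂ (LinearMap.ker ((lam • (1 : X →L[ℂ] X) - K₀ : X →L[ℂ] X) : X →ₗ[ℂ] X)) :=
  statement2_general K₀ ℓ hℓ hℓK₀ v hv K hK
end

section
/- There exists a constant C > 0 such that for every λ ∈ ℂ \ σ(K₀), the operator λI − K is bijective with bounded inverse, and for every g ∈ H, ‖(λI − K)^{-1} g‖ ≤ C · ‖g‖ / dist(λ, σ(K₀)). -/
/-!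
Write `u = (K₀ - ½) v`: this is possible because `u ⊥ ker (K₀ - ½)` and, by the Fredholm
alternative for the compact operator `K₀`, the range of `K₀ - ½` is exactly that orthogonal
complement. With `R = (λ - K₀)⁻¹`, the vector `R φ₀ = (λ - ½)⁻¹ φ₀` is orthogonal to `u`, so the
rank-one perturbation is inverted by `f = R g + ⟪u, R g⟫ (λ - ½)⁻¹ φ₀`. Self-adjointness gives
`⟪u, R g⟫ = (λ - ½) ⟪v, R g⟫ - ⟪v, g⟫`, which cancels the factor `(λ - ½)⁻¹`; together with
`‖R‖ ≤ 1 / dist(λ, σ(K₀))` for the normal operator `K₀` and `½ ∈ σ(K₀)` this yields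
`‖f‖ ≤ (1 + 2‖v‖) ‖g‖ / dist(λ, σ(K₀))`.
-/

open scoped InnerProductSpace Ring ComplexConjugate ComplexInnerProductSpace

theorem IsStarNormal.norm_resolvent_le {A : Type*} [CStarAlgebra A] (a : A) [IsStarNormal a]
    {z : ℂ} (hz : z ∉ spectrum ℂ a) :
    ‖resolvent a z‖ ≤ (Metric.infDist z (spectrum ℂ a))⁻¹ := by
  nontriviality A
  have hd : 0 < Metric.infDist z (spectrum ℂ a) :=
    ((spectrum.isClosed a).notMem_iff_infDist_pos (spectrum.nonempty a)).mp hz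
  have hcfc : cfc (fun x ↦ (z - x)⁻¹) a = resolvent a z := by
    rw [cfc_inv (fun x ↦ z - x) a (fun x hx h ↦ hz (sub_eq_zero.mp h ▸ hx)),
      cfc_sub .., cfc_const .., cfc_id' ..]
    rfl
  rw [← hcfc]
  refine norm_cfc_le (by positivity) fun x hx ↦ ?_
  rw [norm_inv, ← dist_eq_norm]
  exact inv_anti₀ hd (Metric.infDist_le_dist_of_mem hx)

/-- On the orthogonal complement of the `μ`-eigenspace, `μ` is no longer an eigenvalue of the
restriction of `T`, so the Fredholm alternative makes `T - μ` surjective there. -/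
theorem IsCompactOperator.exists_sub_smul_eq_of_mem_orthogonal_eigenspace
    {𝕜 E : Type*} [RCLike 𝕜] [NormedAddCommGroup E] [InnerProductSpace 𝕜 E] [CompleteSpace E]
    {T : E →L[𝕜] E} (hT : IsCompactOperator T) (hT' : IsSelfAdjoint T) {μ : 𝕜} (hμ : μ ≠ 0)
    {u : E} (hu : u ∈ (Module.End.eigenspace (T : Module.End 𝕜 E) μ)ᗮ) :
    ∃ v, T v - μ • v = u := by
  set V := (Module.End.eigenspace (T : Module.End 𝕜 E) μ)ᗮ
  have hV : ∀ x ∈ V, T x ∈ V := (ContinuousLinearMap.isSelfAdjoint_iff_isSymmetric.mp hT')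
    |>.invariant_orthogonalComplement_eigenspace μ
  set S : V →L[𝕜] V := T.restrict hV
  have hS : IsCompactOperator S := hT.restrict hV (Submodule.isClosed_orthogonal _)
  have hS_eig : ¬ Module.End.HasEigenvalue (S : Module.End 𝕜 V) μ := by
    intro h
    obtain ⟨x, hx_mem, hx_ne⟩ := h.exists_hasEigenvector
    have hSx : S x = μ • x := Module.End.mem_eigenspace_iff.mp hx_mem
    have hx_eig : (x : E) ∈ Module.End.eigenspace (T : Module.End 𝕜 E) μ :=
      Module.End.mem_eigenspace_iff.mpr (congrArg Subtype.val hSx)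
    exact hx_ne (Subtype.ext (inner_self_eq_zero.mp
      (Submodule.inner_right_of_mem_orthogonal hx_eig x.2)))
  have hS_res := (hS.hasEigenvalue_or_mem_resolventSet hμ).resolve_left hS_eig
  rw [spectrum.mem_resolventSet_iff, ← IsUnit.neg_iff,
    ContinuousLinearMap.isUnit_iff_bijective] at hS_res
  obtain ⟨w, hw⟩ := hS_res.2 ⟨u, hu⟩
  exact ⟨w, by simpa [S] using congrArg Subtype.val hw⟩

theorem ContinuousLinearMap.inverse_apply_of_apply_eq_smul {𝕜 E : Type*} [NormedField 𝕜]
    [NormedAddCommGroup E] [NormedSpace 𝕜 E] {A : E →L[𝕜] E} (hA : IsUnit A) {c : 𝕜}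
    (hc : c ≠ 0) {x : E} (hx : A x = c • x) : A⁻¹ʳ x = c⁻¹ • x := by
  rw [eq_inv_smul_iff₀ hc, ← map_smul, ← hx]
  simpa using congr($(Ring.inverse_mul_cancel A hA) x)

namespace ContinuousLinearMap

variable {𝕜 E : Type*} [RCLike 𝕜] [NormedAddCommGroup E] [InnerProductSpace 𝕜 E]
  {A : E →L[𝕜] E} {φ u : E}

theorem sub_smulRight_apply_inverse_add (hA : IsUnit A) (h : ⟪u, A⁻¹ʳ φ⟫_𝕜 = 0) (g : E) :
    (A - (innerSL 𝕜 u).smulRight φ) (A⁻¹ʳ g + ⟪u, A⁻¹ʳ g⟫_𝕜 • A⁻¹ʳ φ) = g := by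
  have hAR (x : E) : A (A⁻¹ʳ x) = x := by
    simpa using congr($(Ring.mul_inverse_cancel A hA) x)
  simp [hAR, inner_add_right, inner_smul_right, h]

theorem eq_inverse_add_of_sub_smulRight_apply_eq (hA : IsUnit A) (h : ⟪u, A⁻¹ʳ φ⟫_𝕜 = 0)
    {f g : E} (hf : (A - (innerSL 𝕜 u).smulRight φ) f = g) :
    f = A⁻¹ʳ g + ⟪u, A⁻¹ʳ g⟫_𝕜 • A⁻¹ʳ φ := by
  have hRA (x : E) : A⁻¹ʳ (A x) = x := by
    simpa using congr($(Ring.inverse_mul_cancel A hA) x)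
  have hf' : f = A⁻¹ʳ g + ⟪u, f⟫_𝕜 • A⁻¹ʳ φ := by
    rw [← hf]
    simp [hRA]
  have hinner : ⟪u, f⟫_𝕜 = ⟪u, A⁻¹ʳ g⟫_𝕜 := by
    conv_lhs => rw [hf']
    simp [inner_add_right, inner_smul_right, h]
  rwa [hinner] at hf'

theorem isUnit_sub_smulRight [CompleteSpace E] (hA : IsUnit A) (h : ⟪u, A⁻¹ʳ φ⟫_𝕜 = 0) :
    IsUnit (A - (innerSL 𝕜 u).smulRight φ) := by
  refine isUnit_iff_bijective.mpr
    ⟨fun f₁ f₂ hf ↦ ?_, fun g ↦ ⟨_, sub_smulRight_apply_inverse_add hA h g⟩⟩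
  rw [eq_inverse_add_of_sub_smulRight_apply_eq hA h (f := f₁) rfl,
    eq_inverse_add_of_sub_smulRight_apply_eq hA h hf.symm]

end ContinuousLinearMap

namespace IsSelfAdjoint

variable {𝕜 E : Type*} [RCLike 𝕜] [NormedAddCommGroup E] [InnerProductSpace 𝕜 E]
  [CompleteSpace E] {T : E →L[𝕜] E}

theorem inner_apply_sub_smul_eq (hT : IsSelfAdjoint T) {μ : 𝕜} (hμ : conj μ = μ) (z : 𝕜)
    (v x : E) : ⟪T v - μ • v, x⟫_𝕜 = (z - μ) * ⟪v, x⟫_𝕜 - ⟪v, z • x - T x⟫_𝕜 := by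
  rw [inner_sub_left, inner_sub_right, inner_smul_left, inner_smul_right, hμ,
    ← ContinuousLinearMap.adjoint_inner_right, hT.adjoint_eq]
  ring

theorem norm_add_inner_smul_le (hT : IsSelfAdjoint T) {μ : 𝕜} (hμ : conj μ = μ) {v φ : E}
    (hφ : ‖φ‖ = 1) {z : 𝕜} (hz : z ≠ μ) (x : E) :
    ‖x + ⟪T v - μ • v, x⟫_𝕜 • ((z - μ)⁻¹ • φ)‖ ≤
      ‖x‖ + ‖v‖ * (‖x‖ + ‖z • x - T x‖ / ‖z - μ‖) := by
  have hcoef : ⟪T v - μ • v, x⟫_𝕜 * (z - μ)⁻¹ = ⟪v, x⟫_𝕜 - ⟪v, z • x - T x⟫_𝕜 / (z - μ) := by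
    rw [hT.inner_apply_sub_smul_eq hμ z]
    field_simp [sub_ne_zero.mpr hz]
  calc ‖x + ⟪T v - μ • v, x⟫_𝕜 • ((z - μ)⁻¹ • φ)‖
      ≤ ‖x‖ + ‖⟪v, x⟫_𝕜 - ⟪v, z • x - T x⟫_𝕜 / (z - μ)‖ := by
        grw [norm_add_le, smul_smul, hcoef, norm_smul, hφ, mul_one]
    _ ≤ ‖x‖ + (‖v‖ * ‖x‖ + ‖v‖ * ‖z • x - T x‖ / ‖z - μ‖) := by
        grw [norm_sub_le, norm_div, norm_inner_le_norm, norm_inner_le_norm, mul_div_assoc]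
    _ = ‖x‖ + ‖v‖ * (‖x‖ + ‖z • x - T x‖ / ‖z - μ‖) := by ring

end IsSelfAdjoint

theorem IsSelfAdjoint.norm_resolvent_add_inner_smul_le {H : Type*} [NormedAddCommGroup H]
    [InnerProductSpace ℂ H] [CompleteSpace H] {T : H →L[ℂ] H} (hT : IsSelfAdjoint T)
    {μ z : ℂ} (hμ : μ ∈ spectrum ℂ T) (hz : z ∉ spectrum ℂ T) {φ : H} (hφ : ‖φ‖ = 1)
    (v g : H) :
    ‖resolvent T z g + ⟪T v - μ • v, resolvent T z g⟫ • ((z - μ)⁻¹ • φ)‖ ≤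
      (1 + 2 * ‖v‖) * ‖g‖ / Metric.infDist z (spectrum ℂ T) := by
  have hμ_real : conj μ = μ := by
    rw [hT.mem_spectrum_eq_re hμ, Complex.conj_ofReal]
  have hzμ : z ≠ μ := by
    rintro rfl
    exact hz hμ
  have hRg_eq : z • resolvent T z g - T (resolvent T z g) = g := by
    simpa [resolvent, Algebra.algebraMap_eq_smul_one] using
      congr($(Ring.mul_inverse_cancel _ (spectrum.notMem_iff.mp hz)) g)
  set d := Metric.infDist z (spectrum ℂ T)
  have hRg : ‖resolvent T z g‖ ≤ ‖g‖ / d := by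
    have := hT.isStarNormal
    have hR : ‖resolvent T z‖ ≤ d⁻¹ := IsStarNormal.norm_resolvent_le T hz
    grw [ContinuousLinearMap.le_opNorm, hR, inv_mul_eq_div]
  have hd : 0 < d := ((spectrum.isClosed T).notMem_iff_infDist_pos ⟨μ, hμ⟩).mp hz
  have hdist : d ≤ ‖z - μ‖ := by
    simpa [dist_eq_norm] using Metric.infDist_le_dist_of_mem (x := z) hμ
  calc _ ≤ ‖resolvent T z g‖ + ‖v‖ * (‖resolvent T z g‖ + ‖g‖ / ‖z - μ‖) := by
        simpa only [hRg_eq] using hT.norm_add_inner_smul_le hμ_real hφ hzμ (resolvent T z g)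
    _ ≤ ‖g‖ / d + ‖v‖ * (‖g‖ / d + ‖g‖ / d) := by gcongr
    _ = (1 + 2 * ‖v‖) * ‖g‖ / d := by ring

theorem statement4_general {H : Type*} [NormedAddCommGroup H] [InnerProductSpace ℂ H]
    [CompleteSpace H]
    (K₀ : H →L[ℂ] H) (hK₀compact : IsCompactOperator (⇑K₀))
    (hK₀sa : IsSelfAdjoint K₀)
    (φ₀ : H) (hφ₀norm : ‖φ₀‖ = 1) (hφ₀eig : K₀ φ₀ = (1 / 2 : ℂ) • φ₀)
    (u : H) (hu : ∀ ψ : H, K₀ ψ = (1 / 2 : ℂ) • ψ → ⟪u, ψ⟫ = 0)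
    (K : H →L[ℂ] H) (hK : ∀ ψ : H, K ψ = K₀ ψ + ⟪u, ψ⟫ • φ₀) :
    ∃ C : ℝ, 0 < C ∧ ∀ lam : ℂ, lam ∉ spectrum ℂ K₀ →
      IsUnit (algebraMap ℂ (H →L[ℂ] H) lam - K) ∧
      ∀ g f : H, lam • f - K f = g →
        ‖f‖ ≤ C * ‖g‖ / Metric.infDist lam (spectrum ℂ K₀) := by
  obtain ⟨v, hv⟩ := hK₀compact.exists_sub_smul_eq_of_mem_orthogonal_eigenspace hK₀sa
    (by norm_num) ((Submodule.mem_orthogonal' _ _).mpr fun ψ hψ ↦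
      hu ψ (Module.End.mem_eigenspace_iff.mp hψ))
  have hhalf : (1 / 2 : ℂ) ∈ spectrum ℂ K₀ := by
    rw [ContinuousLinearMap.spectrum_eq]
    exact (Module.End.hasEigenvalue_of_hasEigenvector ⟨Module.End.mem_eigenspace_iff.mpr hφ₀eig,
      ne_zero_of_norm_ne_zero (by simp [hφ₀norm])⟩).mem_spectrum
  refine ⟨1 + 2 * ‖v‖, by positivity, fun lam hlam ↦ ?_⟩
  set A := algebraMap ℂ (H →L[ℂ] H) lam - K₀
  have hA : IsUnit A := spectrum.notMem_iff.mp hlam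
  have hKA : algebraMap ℂ (H →L[ℂ] H) lam - K = A - (innerSL ℂ u).smulRight φ₀ := by
    ext ψ
    simp [A, hK, Algebra.algebraMap_eq_smul_one, sub_add_eq_sub_sub]
  have hRφ₀ : A⁻¹ʳ φ₀ = (lam - 1 / 2)⁻¹ • φ₀ :=
    ContinuousLinearMap.inverse_apply_of_apply_eq_smul hA
      (sub_ne_zero.mpr (by rintro rfl; exact hlam hhalf))
      (by simp [A, Algebra.algebraMap_eq_smul_one, hφ₀eig, sub_smul])
  have hφ₀ : ⟪u, A⁻¹ʳ φ₀⟫ = 0 := by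
    rw [hRφ₀, inner_smul_right, hu φ₀ hφ₀eig, mul_zero]
  refine ⟨hKA ▸ ContinuousLinearMap.isUnit_sub_smulRight hA hφ₀, fun g f hfg ↦ ?_⟩
  rw [ContinuousLinearMap.eq_inverse_add_of_sub_smulRight_apply_eq hA hφ₀ (f := f)
    (by simpa [← hKA, Algebra.algebraMap_eq_smul_one] using hfg), hRφ₀, ← hv]
  exact hK₀sa.norm_resolvent_add_inner_smul_le hhalf hlam hφ₀norm v g

/-- Let `H` be an infinite-dimensional complex Hilbert space,
`K₀ : H →L[ℂ] H` a compact self-adjoint operator, `φ₀` a unit vector with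
`K₀φ₀ = (1/2)φ₀`, and `u` orthogonal to the eigenspace `ker(K₀ − (1/2)I)`.
Define `Kψ := K₀ψ + ⟪u, ψ⟫ • φ₀`.  Then there is a constant `C > 0` such that for
every `λ ∈ ℂ \ σ(K₀)` the operator `λI − K` is bijective with bounded inverse
(i.e. `λ ∉ σ(K)`), and `‖(λI − K)⁻¹ g‖ ≤ C‖g‖ / dist(λ, σ(K₀))` for all `g ∈ H`. -/
theorem statement4 {H : Type*} [NormedAddCommGroup H] [InnerProductSpace ℂ H]
    [CompleteSpace H] (hinf : ¬ FiniteDimensional ℂ H)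
    (K₀ : H →L[ℂ] H) (hK₀compact : IsCompactOperator (⇑K₀))
    (hK₀sa : IsSelfAdjoint K₀)
    (φ₀ : H) (hφ₀norm : ‖φ₀‖ = 1) (hφ₀eig : K₀ φ₀ = (1 / 2 : ℂ) • φ₀)
    (u : H) (hu : ∀ ψ : H, K₀ ψ = (1 / 2 : ℂ) • ψ → ⟪u, ψ⟫ = 0)
    (K : H →L[ℂ] H) (hK : ∀ ψ : H, K ψ = K₀ ψ + ⟪u, ψ⟫ • φ₀) :
    ∃ C : ℝ, 0 < C ∧ ∀ lam : ℂ, lam ∉ spectrum ℂ K₀ →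
      IsUnit (algebraMap ℂ (H →L[ℂ] H) lam - K) ∧
      ∀ g f : H, lam • f - K f = g →
        ‖f‖ ≤ C * ‖g‖ / Metric.infDist lam (spectrum ℂ K₀) :=
  statement4_general K₀ hK₀compact hK₀sa φ₀ hφ₀norm hφ₀eig u hu K hK
end

section
/- Let λ ∈ ℂ with λ ≠ 1/2 be such that λI − A is boundedly invertible. Then λI − K is boundedly invertible, and its inverse is given explicitly by (λI − K)^{-1} f = (λI − A)^{-1} f + ( ⟨φ₀, f⟩ / (λ − 1/2) ) · (λI − A)^{-1} v for every f ∈ H. -/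
open scoped ComplexInnerProductSpace

/-- Let `H` be a complex Hilbert space, `A : H →L[ℂ] H` a bounded
operator, `φ₀ ∈ H` with `A*φ₀ = (1/2)φ₀` (i.e. `⟪φ₀, Ax⟫ = (1/2)⟪φ₀, x⟫` for all `x`),
and `v ∈ H` with `⟪φ₀, v⟫ = 0`.  Define `Kφ := Aφ + ⟪φ₀, φ⟫ • v`.  If `λ ≠ 1/2` and
`λI − A` is boundedly invertible, then `λI − K` is boundedly invertible, with inverse
given by the Sherman–Morrison-type formula
`(λI − K)⁻¹ f = (λI − A)⁻¹ f + (⟪φ₀, f⟫ / (λ − 1/2)) • (λI − A)⁻¹ v`. -/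
theorem statement5 {H : Type*} [NormedAddCommGroup H] [InnerProductSpace ℂ H]
    [CompleteSpace H]
    (A : H →L[ℂ] H) (φ₀ : H)
    (hφ₀ : ∀ x : H, ⟪φ₀, A x⟫ = (1 / 2 : ℂ) * ⟪φ₀, x⟫)
    (v : H) (hv : ⟪φ₀, v⟫ = 0)
    (K : H →L[ℂ] H) (hK : ∀ φ : H, K φ = A φ + ⟪φ₀, φ⟫ • v)
    (lam : ℂ) (hlam : lam ≠ 1 / 2)
    (hA : IsUnit (algebraMap ℂ (H →L[ℂ] H) lam - A)) :
    IsUnit (algebraMap ℂ (H →L[ℂ] H) lam - K) ∧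
    ∀ f : H,
      Ring.inverse (algebraMap ℂ (H →L[ℂ] H) lam - K) f =
        Ring.inverse (algebraMap ℂ (H →L[ℂ] H) lam - A) f +
          (⟪φ₀, f⟫ / (lam - 1 / 2)) •
            Ring.inverse (algebraMap ℂ (H →L[ℂ] H) lam - A) v := by
  set T : H →L[ℂ] H := algebraMap ℂ (H →L[ℂ] H) lam - A with hT
  set R : H →L[ℂ] H := Ring.inverse T with hR
  have hμ : lam - 1 / 2 ≠ 0 := sub_ne_zero.mpr hlam
  have hTR : T * R = 1 := Ring.mul_inverse_cancel T hA
  have hRT : R * T = 1 := Ring.inverse_mul_cancel T hA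
  have hTRf : ∀ x : H, T (R x) = x := fun x => by
    have := congrArg (fun S : H →L[ℂ] H => S x) hTR
    simpa using this
  have hRTf : ∀ x : H, R (T x) = x := fun x => by
    have := congrArg (fun S : H →L[ℂ] H => S x) hRT
    simpa using this
  have hTapp : ∀ x : H, T x = lam • x - A x := fun x => by
    simp [hT, Algebra.algebraMap_eq_smul_one, ContinuousLinearMap.sub_apply]
  have hTin : ∀ y : H, ⟪φ₀, T y⟫ = (lam - 1 / 2) * ⟪φ₀, y⟫ := fun y => by
    rw [hTapp, inner_sub_right, inner_smul_right, hφ₀]; ring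
  have hRin : ∀ x : H, ⟪φ₀, R x⟫ = ⟪φ₀, x⟫ / (lam - 1 / 2) := fun x => by
    have h := hTin (R x)
    rw [hTRf x] at h
    rw [h, mul_div_cancel_left₀ _ hμ]
  -- the candidate inverse
  set B : H →L[ℂ] H :=
    R + (lam - 1 / 2)⁻¹ • (innerSL ℂ φ₀).smulRight (R v) with hB
  have hBapp : ∀ f : H, B f = R f + (⟪φ₀, f⟫ / (lam - 1 / 2)) • R v := fun f => by
    simp [hB, ContinuousLinearMap.add_apply, ContinuousLinearMap.smul_apply,
      ContinuousLinearMap.smulRight_apply, innerSL_apply_apply, smul_smul, div_eq_mul_inv,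
      mul_comm]
  have hKapp : ∀ x : H, (algebraMap ℂ (H →L[ℂ] H) lam - K) x = T x - ⟪φ₀, x⟫ • v :=
    fun x => by
      simp only [ContinuousLinearMap.sub_apply, hK, hT]
      abel
  have h1 : (algebraMap ℂ (H →L[ℂ] H) lam - K) * B = 1 := by
    ext f
    have hBf := hBapp f
    simp only [ContinuousLinearMap.mul_apply, ContinuousLinearMap.one_apply, hKapp, hBf]
    rw [map_add, map_smul, hTRf, hTRf, inner_add_right, inner_smul_right, hRin, hRin, hv]
    rw [show ⟪φ₀, f⟫ / (lam - 1 / 2) + ⟪φ₀, f⟫ / (lam - 1 / 2) * (0 / (lam - 1 / 2)) =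
      ⟪φ₀, f⟫ / (lam - 1 / 2) by ring, add_sub_cancel_right]
  have h2 : B * (algebraMap ℂ (H →L[ℂ] H) lam - K) = 1 := by
    ext f
    simp only [ContinuousLinearMap.mul_apply, ContinuousLinearMap.one_apply, hKapp,
      hBapp]
    rw [map_sub, map_smul, hRTf, inner_sub_right, hTin, inner_smul_right, hv]
    rw [mul_zero, sub_zero]
    rw [mul_div_cancel_left₀ (⟪φ₀, f⟫) hμ]
    abel
  set u : (H →L[ℂ] H)ˣ := ⟨algebraMap ℂ (H →L[ℂ] H) lam - K, B, h1, h2⟩ with hu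
  have hIsUnit : IsUnit (algebraMap ℂ (H →L[ℂ] H) lam - K) := ⟨u, rfl⟩
  refine ⟨hIsUnit, fun f => ?_⟩
  have hinv : Ring.inverse (algebraMap ℂ (H →L[ℂ] H) lam - K) = B := by
    have := Ring.inverse_unit u
    simpa [hu] using this
  rw [hinv, hBapp]
end
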